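/- Let β₁ and β₂ be words over the alphabet {L, M, R} of the same length n ≥ 1, and suppose the word β₁β̄₁ is a cyclic rotation of the word β₂β̄₂. If β₁ ≠ β₂ and β₁ ≠ β̄₂, then there exist nonempty words λ and μ with β₂ = λμ such that either β₁ = μ̄λ or β₁ = μλ̄. -/
import Mathlib


/-- The three-letter alphabet {L, M, R}. -/
inductive Letter : Type
  | L | M | R
deriving DecidableEq, Repr

/-- Complementation on letters: R̄ = L, L̄ = R, M̄ = M. -/
def Letter.bar : Letter → Letter
  | .L => .R
  | .M => .M
  | .R => .L

/-- Complement of a word (letterwise). -/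
def comp (w : List Letter) : List Letter := w.map Letter.bar

/-- k-fold concatenation of a word with itself. -/
def npow (w : List Letter) : ℕ → List Letter
  | 0 => []
  | n + 1 => w ++ npow w n

lemma comp_length (w : List Letter) : (comp w).length = w.length := by
  simp [comp]

lemma comp_append (x y : List Letter) : comp (x ++ y) = comp x ++ comp y := by
  simp [comp]

lemma comp_take (k : ℕ) (w : List Letter) : comp (w.take k) = (comp w).take k := by
  simp [comp, List.map_take]

lemma comp_drop (k : ℕ) (w : List Letter) : comp (w.drop k) = (comp w).drop k := by
  simp [comp, List.map_drop]

lemma first_eq {a b c d : List Letter} (h : a ++ b = c ++ d)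
    (hl : a.length = c.length) : a = c :=
  List.append_inj_left h hl

theorem stmt_15 (n : ℕ) (hn : 1 ≤ n) (β₁ β₂ : List Letter)
    (h₁ : β₁.length = n) (h₂ : β₂.length = n)
    (hrot : ∃ j : ℕ, (β₂ ++ comp β₂).rotate j = β₁ ++ comp β₁)
    (hne₁ : β₁ ≠ β₂) (hne₂ : β₁ ≠ comp β₂) :
    ∃ lam mu : List Letter, lam ≠ [] ∧ mu ≠ [] ∧ β₂ = lam ++ mu ∧
      (β₁ = comp mu ++ lam ∨ β₁ = mu ++ comp lam) := by
  obtain ⟨j, hrot⟩ := hrot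
  have hlen2 : (β₂ ++ comp β₂).length = 2 * n := by
    simp [comp_length, h₂]; omega
  rw [← List.rotate_mod] at hrot
  set j' := j % (β₂ ++ comp β₂).length with hj'
  have hj'lt : j' < 2 * n := by
    have : j' < (β₂ ++ comp β₂).length := Nat.mod_lt _ (by rw [hlen2]; omega)
    omega
  rcases Nat.lt_or_ge j' n with hlt | hge
  · -- 0 ≤ j' < n
    rcases Nat.eq_zero_or_pos j' with h0 | hpos
    · rw [h0, List.rotate_zero] at hrot
      exact absurd (first_eq hrot (by omega)) (fun h => hne₁ h.symm)
    · have hj'le : j' ≤ (β₂ ++ comp β₂).length := by omega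
      rw [List.rotate_eq_drop_append_take hj'le] at hrot
      rw [List.drop_append_of_le_length (by omega),
          List.take_append_of_le_length (by omega)] at hrot
      -- hrot : β₂.drop j' ++ comp β₂ ++ β₂.take j' = β₁ ++ comp β₁
      have hsplit : comp β₂ = comp (β₂.take j') ++ comp (β₂.drop j') := by
        rw [← comp_append, List.take_append_drop]
      rw [hsplit] at hrot
      have hre : β₂.drop j' ++ (comp (β₂.take j') ++ comp (β₂.drop j')) ++ β₂.take j'
          = (β₂.drop j' ++ comp (β₂.take j')) ++ (comp (β₂.drop j') ++ β₂.take j') := by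
        simp [List.append_assoc]
      rw [hre] at hrot
      have hβ₁ : β₂.drop j' ++ comp (β₂.take j') = β₁ := by
        apply first_eq hrot
        simp [comp_length, h₁, h₂]
        omega
      refine ⟨β₂.take j', β₂.drop j', ?_, ?_, (List.take_append_drop _ _).symm,
        Or.inr hβ₁.symm⟩
      · intro h
        have := congrArg List.length h
        simp [h₂] at this
        omega
      · intro h
        have := congrArg List.length h
        simp [h₂] at this
        omega
  · -- n ≤ j' < 2n
    have hrotn : (β₂ ++ comp β₂).rotate n = comp β₂ ++ β₂ := by
      have : n = β₂.length := h₂.symm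
      rw [this, List.rotate_append_length_eq]
    rcases Nat.eq_or_lt_of_le hge with h0 | hpos
    · rw [← h0, hrotn] at hrot
      exact absurd (first_eq hrot (by simp [comp_length, h₁, h₂])).symm hne₂
    · set k := j' - n with hk
      have hkpos : 0 < k := by omega
      have hklt : k < n := by omega
      have hjeq : j' = n + k := by omega
      rw [hjeq, ← List.rotate_rotate, hrotn] at hrot
      have hkle : k ≤ (comp β₂ ++ β₂).length := by
        simp [comp_length, h₂]; omega
      rw [List.rotate_eq_drop_append_take hkle,
          List.drop_append_of_le_length (by simp [comp_length, h₂]; omega),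
          List.take_append_of_le_length (by simp [comp_length, h₂]; omega)] at hrot
      -- hrot : (comp β₂).drop k ++ β₂ ++ (comp β₂).take k = β₁ ++ comp β₁
      have hrot' : ((comp β₂).drop k ++ β₂.take k) ++ (β₂.drop k ++ (comp β₂).take k)
          = β₁ ++ comp β₁ := by
        have : (comp β₂).drop k ++ (β₂.take k ++ β₂.drop k) ++ (comp β₂).take k
            = β₁ ++ comp β₁ := by rw [List.take_append_drop]; exact hrot
        rw [← this]; simp only [List.append_assoc]
      replace hrot := hrot'
      have hβ₁ : (comp β₂).drop k ++ β₂.take k = β₁ := by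
        apply first_eq hrot
        simp [comp_length, h₁, h₂]
        omega
      rw [← comp_drop] at hβ₁
      refine ⟨β₂.take k, β₂.drop k, ?_, ?_, (List.take_append_drop _ _).symm,
        Or.inl hβ₁.symm⟩
      · intro h
        have := congrArg List.length h
        simp [h₂] at this
        omega
      · intro h
        have := congrArg List.length h
        simp [h₂] at this
        omega
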